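/- Let x be chosen uniformly at random from the k-dimensional ℓ_p unit sphere {x : ‖x‖_p = 1} for p ≥ 1 and k ≥ 2. Then E[‖x‖_∞] ≤ 5 (log k)^{1/p} / k^{1/p}. -/

import Mathlib

/-!
On the `ℓ_p` unit sphere, scaling all coordinates but the `i`-th by `λ = (1 - t ^ p) ^ (1 / p)` and
readjusting the `i`-th one to stay on the sphere is a `λ`-Lipschitz map from the half-sphere
`{0 ≤ ±x i}` onto the cap `{t ≤ ±x i}`. Hence the cap has `d`-dimensional Hausdorff measure at most
`λ ^ d ≤ exp (-d t ^ p / p)` times that of the sphere. As `‖x‖_∞ ≤ 1` on the sphere,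
`‖x‖_∞ ≤ t + #{i | t ≤ |x i|}`; integrating with `d = k - 1` and `t = 4 (log k / k) ^ (1 / p)` gives
the bound `t + 2 k · k⁻³ ≤ 5 (log k / k) ^ (1 / p)` whenever the right-hand side is below `1`, and
otherwise the claim is trivial.
-/

open Real MeasureTheory

section Scalar

variable {p : ℝ}

lemma rpow_add_rpow_rpow_inv_le_add_sub (hp : 1 ≤ p) {c a b : ℝ} (hc : 0 ≤ c) (hb : 0 ≤ b)
    (hba : b ≤ a) : (c + a ^ p) ^ (1 / p) ≤ (c + b ^ p) ^ (1 / p) + (a - b) := by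
  have hp0 : p ≠ 0 := by positivity
  have hab : 0 ≤ a - b := sub_nonneg.2 hba
  -- Minkowski's inequality for `(c ^ (1 / p), b) + (0, a - b)`.
  have h := Real.Lp_add_le_of_nonneg (s := Finset.univ) (f := ![c ^ (1 / p), b])
    (g := ![0, a - b]) hp (by intro i _; fin_cases i <;> simp <;> positivity)
    (by intro i _; fin_cases i <;> simp [hab])
  simp only [Fin.sum_univ_two, Matrix.cons_val_zero, Matrix.cons_val_one, add_zero, zero_add,
    add_sub_cancel, zero_rpow hp0, one_div, rpow_inv_rpow hc hp0, rpow_rpow_inv hab hp0] at h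
  simpa only [one_div] using h

lemma abs_rpow_add_rpow_rpow_inv_sub_le (hp : 1 ≤ p) {c a b : ℝ} (hc : 0 ≤ c) (ha : 0 ≤ a)
    (hb : 0 ≤ b) : |(c + a ^ p) ^ (1 / p) - (c + b ^ p) ^ (1 / p)| ≤ |a - b| := by
  wlog hba : b ≤ a generalizing a b
  · rw [abs_sub_comm, abs_sub_comm a]; exact this hb ha (le_of_not_ge hba)
  have hmono : (c + b ^ p) ^ (1 / p) ≤ (c + a ^ p) ^ (1 / p) := by gcongr
  rw [abs_of_nonneg (sub_nonneg.2 hmono), abs_of_nonneg (sub_nonneg.2 hba)]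
  linarith [rpow_add_rpow_rpow_inv_le_add_sub hp hc hb hba]

lemma abs_rpow_add_mul_rpow_rpow_inv_sub_le (hp : 1 ≤ p) {c a b : ℝ} (hc : 0 ≤ c) (hc1 : c ≤ 1)
    (ha : 0 ≤ a) (hb : 0 ≤ b) :
    |(c + (1 - c) * a ^ p) ^ (1 / p) - (c + (1 - c) * b ^ p) ^ (1 / p)|
      ≤ (1 - c) ^ (1 / p) * |a - b| := by
  have hp0 : p ≠ 0 := by positivity
  have h1c : 0 ≤ 1 - c := sub_nonneg.2 hc1
  have hscale : ∀ u, 0 ≤ u → (1 - c) * u ^ p = ((1 - c) ^ (1 / p) * u) ^ p := fun u hu => by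
    rw [mul_rpow (by positivity) hu, one_div, rpow_inv_rpow h1c hp0]
  rw [hscale a ha, hscale b hb, ← abs_of_nonneg (rpow_nonneg h1c (1 / p)), ← abs_mul, mul_sub,
    abs_of_nonneg (rpow_nonneg h1c (1 / p))]
  exact abs_rpow_add_rpow_rpow_inv_sub_le hp hc (by positivity) (by positivity)

end Scalar

lemma EuclideanSpace.lipschitzOnWith_of_dist_apply_le {ι : Type*} [Fintype ι]
    {f : EuclideanSpace ℝ ι → EuclideanSpace ℝ ι} {K : NNReal} {s : Set (EuclideanSpace ℝ ι)}
    (h : ∀ x ∈ s, ∀ y ∈ s, ∀ j, dist (f x j) (f y j) ≤ K * dist (x j) (y j)) :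
    LipschitzOnWith K f s := by
  refine LipschitzOnWith.of_dist_le_mul fun x hx y hy => ?_
  rw [EuclideanSpace.dist_eq, EuclideanSpace.dist_eq, ← sqrt_sq K.coe_nonneg,
    ← sqrt_mul (sq_nonneg _), Finset.mul_sum]
  gcongr with j
  rw [← mul_pow]
  exact pow_le_pow_left₀ dist_nonneg (h x hx y hy j) 2

lemma setLIntegral_ofReal_iSup_le {α ι : Type*} [MeasurableSpace α] [Fintype ι] (μ : Measure α)
    (s : Set α) {f : ι → α → ℝ} (hf : ∀ i, Measurable (f i)) (hf1 : ∀ x ∈ s, ∀ i, f i x ≤ 1)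
    {t : ℝ} (ht : 0 ≤ t) :
    ∫⁻ x in s, ENNReal.ofReal (⨆ i, f i x) ∂μ ≤
      ENNReal.ofReal t * μ s + ∑ i, μ (s ∩ {x | t ≤ f i x}) := by
  have hA : ∀ i, MeasurableSet {x | t ≤ f i x} := fun i => measurableSet_le measurable_const (hf i)
  calc ∫⁻ x in s, ENNReal.ofReal (⨆ i, f i x) ∂μ
      ≤ ∫⁻ x in s, (ENNReal.ofReal t + ∑ i, {x | t ≤ f i x}.indicator 1 x) ∂μ := by
        refine setLIntegral_mono (by fun_prop (disch := exact hA _)) fun x hx => ?_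
        by_cases hbig : ∃ i, t ≤ f i x
        · obtain ⟨i, hi⟩ := hbig
          calc ENNReal.ofReal (⨆ i, f i x) ≤ 1 :=
                ENNReal.ofReal_le_one.2 (Real.iSup_le (hf1 x hx) zero_le_one)
            _ = {x | t ≤ f i x}.indicator 1 x :=
                (Set.indicator_of_mem (s := {x | t ≤ f i x}) hi 1).symm
            _ ≤ ∑ i, {x | t ≤ f i x}.indicator 1 x :=
                Finset.single_le_sum (f := fun i => {x | t ≤ f i x}.indicator (1 : α → ENNReal) x)
                  (fun _ _ => zero_le) (Finset.mem_univ i)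
            _ ≤ _ := le_add_self
        · push Not at hbig
          exact le_add_right (ENNReal.ofReal_le_ofReal (Real.iSup_le (fun i => (hbig i).le) ht))
    _ = ENNReal.ofReal t * μ s + ∑ i, μ (s ∩ {x | t ≤ f i x}) := by
        rw [lintegral_add_left measurable_const, setLIntegral_const,
          lintegral_finsetSum _ fun i _ => measurable_one.indicator (hA i)]
        simp only [lintegral_indicator_one (hA _), Measure.restrict_apply (hA _), Set.inter_comm]

section Sphere

variable {ι : Type*} [Fintype ι] {p : ℝ}

def lpUnitSphere (ι : Type*) [Fintype ι] (p : ℝ) : Set (EuclideanSpace ℝ ι) :=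
  {x | (∑ i, |x i| ^ p) ^ (1 / p) = 1}

lemma mem_lpUnitSphere_iff (hp : p ≠ 0) {x : EuclideanSpace ℝ ι} :
    x ∈ lpUnitSphere ι p ↔ ∑ i, |x i| ^ p = 1 := by
  have h0 : 0 ≤ ∑ i, |x i| ^ p := by positivity
  rw [lpUnitSphere, Set.mem_ofPred_eq, one_div, rpow_inv_eq h0 zero_le_one hp, one_rpow]

lemma abs_apply_le_one_of_mem_lpUnitSphere (hp : 0 < p) {x : EuclideanSpace ℝ ι}
    (hx : x ∈ lpUnitSphere ι p) (i : ι) : |x i| ≤ 1 := by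
  by_contra! h
  have hsingle : |x i| ^ p ≤ ∑ j, |x j| ^ p :=
    Finset.single_le_sum (f := fun j => |x j| ^ p) (fun j _ => by positivity) (Finset.mem_univ i)
  rw [(mem_lpUnitSphere_iff hp.ne').1 hx] at hsingle
  linarith [one_lt_rpow h hp]

lemma setLIntegral_lpUnitSphere_ofReal_iSup_abs_le_measure (hp : 0 < p)
    (μ : Measure (EuclideanSpace ℝ ι)) :
    ∫⁻ x in lpUnitSphere ι p, ENNReal.ofReal (⨆ i, |x i|) ∂μ ≤ μ (lpUnitSphere ι p) :=
  calc _ ≤ ∫⁻ _ in lpUnitSphere ι p, 1 ∂μ :=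
        setLIntegral_mono measurable_const fun _ hx => ENNReal.ofReal_le_one.2
          (Real.iSup_le (abs_apply_le_one_of_mem_lpUnitSphere hp hx) zero_le_one)
    _ = μ (lpUnitSphere ι p) := setLIntegral_one _

variable [DecidableEq ι]

/-- For `c = t ^ p`, this map sends the half-sphere `lpUnitSphere ι p ∩ {x | 0 ≤ ε * x i}` onto a
superset of the cap `lpUnitSphere ι p ∩ {x | t ≤ ε * x i}`. -/
noncomputable def capMap (p c ε : ℝ) (i : ι) (x : EuclideanSpace ℝ ι) : EuclideanSpace ℝ ι :=
  WithLp.toLp 2 fun j =>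
    if j = i then ε * (c + (1 - c) * (ε * x i) ^ p) ^ (1 / p) else (1 - c) ^ (1 / p) * x j

lemma lipschitzOnWith_capMap (hp : 1 ≤ p) {c ε : ℝ} (hc : 0 ≤ c) (hc1 : c ≤ 1) (hε : |ε| = 1)
    (i : ι) : LipschitzOnWith ((1 - c) ^ (1 / p)).toNNReal (capMap p c ε i) {x | 0 ≤ ε * x i} := by
  refine EuclideanSpace.lipschitzOnWith_of_dist_apply_le fun x hx y hy j => ?_
  rw [coe_toNNReal _ (by bound), dist_eq, dist_eq]
  by_cases hj : j = i
  · subst hj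
    simp only [capMap, ↓reduceIte]
    rw [← mul_sub, abs_mul, hε, one_mul]
    calc _ ≤ (1 - c) ^ (1 / p) * |ε * x j - ε * y j| :=
          abs_rpow_add_mul_rpow_rpow_inv_sub_le hp hc hc1 hx hy
      _ = _ := by rw [← mul_sub, abs_mul, hε, one_mul]
  · simp only [capMap, if_neg hj, ← mul_sub, abs_mul,
      abs_of_nonneg (by bound : 0 ≤ (1 - c) ^ (1 / p)), le_refl]

lemma lpUnitSphere_inter_subset_image_capMap (hp : 0 < p) {t ε : ℝ} (ht : 0 < t) (ht1 : t ^ p < 1)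
    (hε : |ε| = 1) (i : ι) :
    lpUnitSphere ι p ∩ {x | t ≤ ε * x i} ⊆
      capMap p (t ^ p) ε i '' (lpUnitSphere ι p ∩ {x | 0 ≤ ε * x i}) := by
  rintro z ⟨hz, hzi⟩
  set c := t ^ p
  have hεε : ε * ε = 1 := by rw [← abs_mul_abs_self, hε, one_mul]
  have hc : 0 < 1 - c := sub_pos.2 ht1
  have hzi0 : 0 ≤ ε * z i := ht.le.trans hzi
  have hcz : c ≤ (ε * z i) ^ p := rpow_le_rpow ht.le hzi hp.le
  obtain ⟨w, hw0, hw⟩ : ∃ w : ℝ, 0 ≤ w ∧ w ^ p = ((ε * z i) ^ p - c) / (1 - c) :=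
    ⟨(((ε * z i) ^ p - c) / (1 - c)) ^ (1 / p), by positivity,
      by rw [one_div, rpow_inv_rpow (div_nonneg (sub_nonneg.2 hcz) hc.le) hp.ne']⟩
  set lam := (1 - c) ^ (1 / p) with hlam_def
  have hlam0 : 0 < lam := by positivity
  have hlam : lam ^ p = 1 - c := by rw [hlam_def, one_div, rpow_inv_rpow hc.le hp.ne']
  have hzsum := (mem_lpUnitSphere_iff hp.ne').1 hz
  rw [← Finset.add_sum_erase _ _ (Finset.mem_univ i)] at hzsum
  have hzi' : |z i| ^ p = (ε * z i) ^ p := by rw [← abs_of_nonneg hzi0, abs_mul, hε, one_mul]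
  refine ⟨WithLp.toLp 2 fun j => if j = i then ε * w else z j / lam, ⟨?_, ?_⟩, ?_⟩
  · rw [mem_lpUnitSphere_iff hp.ne', ← Finset.add_sum_erase _ _ (Finset.mem_univ i)]
    rw [Finset.sum_congr rfl fun j hj => by
      rw [PiLp.toLp_apply, if_neg (Finset.ne_of_mem_erase hj), abs_div, abs_of_pos hlam0,
        div_rpow (abs_nonneg _) hlam0.le, hlam]]
    simp only [↓reduceIte, abs_mul, hε, one_mul, abs_of_nonneg hw0, hw, ← Finset.sum_div]
    rw [← hzi']
    field_simp
    linarith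
  · simp only [Set.mem_ofPred_eq, ↓reduceIte, ← mul_assoc, hεε, one_mul, hw0]
  · ext j
    by_cases hj : j = i
    · subst hj
      simp only [capMap, PiLp.toLp_apply, ↓reduceIte, ← mul_assoc, hεε, one_mul, hw]
      rw [mul_div_cancel₀ _ hc.ne', add_sub_cancel, one_div, rpow_rpow_inv hzi0 hp.ne',
        ← mul_assoc, hεε, one_mul]
    · simp only [capMap, PiLp.toLp_apply, if_neg hj]
      exact mul_div_cancel₀ _ hlam0.ne'

lemma hausdorffMeasure_lpUnitSphere_inter_setOf_le_mul_apply_le {d : ℝ} (hd : 0 ≤ d) (hp : 1 ≤ p)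
    {t ε : ℝ} (ht : 0 < t) (ht1 : t ^ p < 1) (hε : |ε| = 1) (i : ι) :
    μH[d] (lpUnitSphere ι p ∩ {x | t ≤ ε * x i}) ≤
      ENNReal.ofReal (exp (-(d * t ^ p / p))) * μH[d] (lpUnitSphere ι p) := by
  have hp0 : 0 < p := by positivity
  have hc : 0 ≤ 1 - t ^ p := sub_nonneg.2 ht1.le
  have hshrink : ((1 - t ^ p) ^ (1 / p)) ^ d ≤ exp (-(d * t ^ p / p)) := by
    rw [← rpow_mul hc]
    calc (1 - t ^ p) ^ (1 / p * d) ≤ exp (-t ^ p) ^ (1 / p * d) := by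
          gcongr; linarith [add_one_le_exp (-t ^ p)]
      _ = exp (-(d * t ^ p / p)) := by rw [← exp_mul]; ring_nf
  calc μH[d] (lpUnitSphere ι p ∩ {x | t ≤ ε * x i})
      ≤ μH[d] (capMap p (t ^ p) ε i '' (lpUnitSphere ι p ∩ {x | 0 ≤ ε * x i})) :=
        measure_mono (lpUnitSphere_inter_subset_image_capMap hp0 ht ht1 hε i)
    _ ≤ ((1 - t ^ p) ^ (1 / p)).toNNReal ^ d * μH[d] (lpUnitSphere ι p ∩ {x | 0 ≤ ε * x i}) :=
        ((lipschitzOnWith_capMap hp (by positivity) ht1.le hε i).mono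
          Set.inter_subset_right).hausdorffMeasure_image_le hd
    _ ≤ ENNReal.ofReal (exp (-(d * t ^ p / p))) * μH[d] (lpUnitSphere ι p) := by
        rw [← ENNReal.ofReal, ENNReal.ofReal_rpow_of_nonneg (by positivity) hd]
        gcongr
        exact Set.inter_subset_left

lemma hausdorffMeasure_lpUnitSphere_inter_setOf_le_abs_apply_le {d : ℝ} (hd : 0 ≤ d) (hp : 1 ≤ p)
    {t : ℝ} (ht : 0 < t) (ht1 : t ^ p < 1) (i : ι) :
    μH[d] (lpUnitSphere ι p ∩ {x | t ≤ |x i|}) ≤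
      2 * ENNReal.ofReal (exp (-(d * t ^ p / p))) * μH[d] (lpUnitSphere ι p) := by
  have hsub : lpUnitSphere ι p ∩ {x | t ≤ |x i|} ⊆
      lpUnitSphere ι p ∩ {x | t ≤ 1 * x i} ∪ lpUnitSphere ι p ∩ {x | t ≤ -1 * x i} := by
    rintro x ⟨hx, hxi⟩
    rcases le_abs.1 (show t ≤ |x i| from hxi) with h | h
    · exact Or.inl ⟨hx, show t ≤ 1 * x i by rwa [one_mul]⟩
    · exact Or.inr ⟨hx, show t ≤ -1 * x i by rwa [neg_one_mul]⟩
  calc μH[d] (lpUnitSphere ι p ∩ {x | t ≤ |x i|})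
      ≤ μH[d] (lpUnitSphere ι p ∩ {x | t ≤ 1 * x i}) +
          μH[d] (lpUnitSphere ι p ∩ {x | t ≤ -1 * x i}) :=
        (measure_mono hsub).trans (measure_union_le _ _)
    _ ≤ _ := by
        rw [mul_assoc, two_mul]
        gcongr <;> apply hausdorffMeasure_lpUnitSphere_inter_setOf_le_mul_apply_le hd hp ht ht1 <;> simp

lemma setLIntegral_lpUnitSphere_ofReal_iSup_abs_le_mul_hausdorffMeasure {d : ℝ} (hd : 0 ≤ d)
    (hp : 1 ≤ p) {t : ℝ} (ht : 0 < t) (ht1 : t ^ p < 1) :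
    ∫⁻ x in lpUnitSphere ι p, ENNReal.ofReal (⨆ i, |x i|) ∂μH[d] ≤
      ENNReal.ofReal (t + 2 * Fintype.card ι * exp (-(d * t ^ p / p))) *
        μH[d] (lpUnitSphere ι p) := by
  have hp0 : 0 < p := by linarith
  calc _ ≤ ENNReal.ofReal t * μH[d] (lpUnitSphere ι p) +
        ∑ i, μH[d] (lpUnitSphere ι p ∩ {x | t ≤ |x i|}) :=
        setLIntegral_ofReal_iSup_le _ _ (fun i => by fun_prop)
          (fun x hx => abs_apply_le_one_of_mem_lpUnitSphere hp0 hx) ht.le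
    _ ≤ ENNReal.ofReal t * μH[d] (lpUnitSphere ι p) +
        ∑ _i : ι, 2 * ENNReal.ofReal (exp (-(d * t ^ p / p))) * μH[d] (lpUnitSphere ι p) := by
        gcongr with i
        exact hausdorffMeasure_lpUnitSphere_inter_setOf_le_abs_apply_le hd hp ht ht1 i
    _ = _ := by
        rw [Finset.sum_const, Finset.card_univ, nsmul_eq_mul,
          ENNReal.ofReal_add ht.le (by positivity),
          ENNReal.ofReal_mul (show (0 : ℝ) ≤ 2 * Fintype.card ι by positivity),
          ENNReal.ofReal_mul zero_le_two, ENNReal.ofReal_natCast, ENNReal.ofReal_ofNat]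
        ring

end Sphere

lemma mul_le_rpow_of_exp_one_le {b p : ℝ} (hb : exp 1 ≤ b) (hp : 1 ≤ p) : b * p ≤ b ^ p := by
  have hb0 : 0 < b := (exp_pos 1).trans_le hb
  have hlog : 1 ≤ log b := (le_log_iff_exp_le hb0).2 hb
  have hpow : p ≤ b ^ (p - 1) := by
    rw [rpow_def_of_pos hb0]
    nlinarith [add_one_le_exp (log b * (p - 1))]
  calc b * p ≤ b * b ^ (p - 1) := by gcongr
    _ = b ^ p := by rw [← rpow_one_add' hb0.le (by linarith), add_sub_cancel]

lemma four_le_of_five_mul_log_lt {k : ℕ} (hk : 2 ≤ k) (h : 5 * log k < k) : 4 ≤ k := by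
  by_contra! hk3
  have hk2 : (2 : ℝ) ≤ k := by exact_mod_cast hk
  have hk3' : (k : ℝ) ≤ 3 := by exact_mod_cast Nat.lt_succ_iff.1 hk3
  linarith [log_le_log (by norm_num) hk2, log_two_gt_d9]

lemma log_div_self_le_rpow {x p : ℝ} (hx : 1 ≤ x) (hp : 1 ≤ p) :
    log x / x ≤ (log x / x) ^ (1 / p) := by
  have hx0 : 0 < x := by linarith
  have hLx : log x / x ≤ 1 := (div_le_one hx0).2 ((log_le_sub_one_of_pos hx0).trans (by linarith))
  exact self_le_rpow_of_le_one (div_nonneg (log_nonneg hx) hx0.le) hLx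
    (div_le_one_of_le₀ hp (by linarith))

lemma two_mul_mul_exp_le {k : ℕ} (hk : 4 ≤ k) {p : ℝ} (hp : 1 ≤ p) :
    2 * k * exp (-((k - 1) * (4 * (log k / k) ^ (1 / p)) ^ p / p)) ≤ (log k / k) ^ (1 / p) := by
  have hk4 : (4 : ℝ) ≤ k := by exact_mod_cast hk
  have hk0 : (0 : ℝ) < k := by linarith
  have hL : 1 ≤ log k :=
    (le_log_iff_exp_le hk0).2 (exp_one_lt_d9.le.trans (by linarith))
  have hp0 : 0 < p := by linarith
  have h4p : (4 * (log k / k) ^ (1 / p)) ^ p = 4 ^ p * (log k / k) := by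
    rw [mul_rpow (by norm_num) (by positivity), one_div, rpow_inv_rpow (by positivity) hp0.ne']
  have hexponent : 3 * log k ≤ (k - 1) * (4 * (log k / k) ^ (1 / p)) ^ p / p := by
    rw [h4p, le_div_iff₀ hp0]
    have h4 : 4 * p ≤ 4 ^ p := mul_le_rpow_of_exp_one_le (exp_one_lt_d9.le.trans (by norm_num)) hp
    have hsplit : (k - 1) * (4 * p * (log k / k)) = 3 * log k * p + p * log k * (k - 4) / k := by
      field_simp
      ring
    calc 3 * log k * p ≤ (k - 1) * (4 * p * (log k / k)) := by
          rw [hsplit]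
          have : 0 ≤ p * log k * (k - 4) / k := by
            have := sub_nonneg.2 hk4
            positivity
          linarith
      _ ≤ (k - 1) * (4 ^ p * (log k / k)) := by gcongr; linarith
  calc 2 * k * exp (-((k - 1) * (4 * (log k / k) ^ (1 / p)) ^ p / p))
      ≤ 2 * k * exp (-(3 * log k)) := by gcongr
    _ = 2 / k ^ 2 := by
        rw [show (3 : ℝ) * log k = ((3 : ℕ) : ℝ) * log k by norm_num, exp_neg, exp_nat_mul,
          exp_log hk0]
        field_simp
    _ ≤ log k / k := by
        rw [div_le_div_iff₀ (by positivity) hk0]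
        nlinarith
    _ ≤ (log k / k) ^ (1 / p) := log_div_self_le_rpow (by linarith) hp

theorem stmt_18 (k : ℕ) (hk : 2 ≤ k) (p : ℝ) (hp : 1 ≤ p) :
    ∫⁻ x in {x : EuclideanSpace ℝ (Fin k) | (∑ i, |x i| ^ p) ^ (1 / p) = 1},
        ENNReal.ofReal (⨆ i, |x i|) ∂μH[(k : ℝ) - 1] ≤
      ENNReal.ofReal (5 * (Real.log k) ^ (1 / p) / (k : ℝ) ^ (1 / p)) *
        μH[(k : ℝ) - 1] {x : EuclideanSpace ℝ (Fin k) | (∑ i, |x i| ^ p) ^ (1 / p) = 1} := by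
  change ∫⁻ x in lpUnitSphere (Fin k) p, _ ∂_ ≤ _ * μH[(k : ℝ) - 1] (lpUnitSphere (Fin k) p)
  have hp0 : 0 < p := by linarith
  have hk1 : (1 : ℝ) < k := by exact_mod_cast hk
  set v := (log k / k) ^ (1 / p) with hv
  have hv0 : 0 < v := by have := log_pos hk1; positivity
  rw [show 5 * log k ^ (1 / p) / (k : ℝ) ^ (1 / p) = 5 * v by
    rw [hv, div_rpow (log_nonneg hk1.le) (by positivity), mul_div_assoc]]
  rcases le_or_gt 1 (5 * v) with hv1 | hv1
  · exact (setLIntegral_lpUnitSphere_ofReal_iSup_abs_le_measure hp0 _).trans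
      (le_mul_of_one_le_left' (ENNReal.one_le_ofReal.2 hv1))
  have hk4 : 4 ≤ k := by
    refine four_le_of_five_mul_log_lt hk ?_
    have := log_div_self_le_rpow hk1.le hp
    have := (div_lt_iff₀ (by positivity : (0 : ℝ) < k)).1 (by linarith : log k / k < 1 / 5)
    linarith
  -- Splitting at `4 * v` makes the tail contribution at most `2 / k ^ 2 ≤ v`.
  calc _ ≤ ENNReal.ofReal (4 * v + 2 * Fintype.card (Fin k) * exp (-((k - 1) * (4 * v) ^ p / p))) *
          μH[(k : ℝ) - 1] (lpUnitSphere (Fin k) p) :=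
        setLIntegral_lpUnitSphere_ofReal_iSup_abs_le_mul_hausdorffMeasure (by linarith) hp
          (by positivity) (rpow_lt_one (by positivity) (by linarith) hp0)
    _ ≤ ENNReal.ofReal (5 * v) * μH[(k : ℝ) - 1] (lpUnitSphere (Fin k) p) := by
        gcongr
        rw [Fintype.card_fin]
        linarith [two_mul_mul_exp_le hk4 hp]
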